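/- arXiv:2311.12306 — 4 statements merged into one kernel-verified Lean document; each statement's English description precedes it below -/
import Mathlib

section
/- Let k : ℝ → ℝ be smooth with support in [0,1], and define φ₀(r) = -(1/r)∫₀^r s·e^{s²/2}(∫_s^∞ e^{-l²/2} k(l) dl) ds for r > 0. Then φ₀ satisfies the ODE φ₀'' + (1/r)φ₀' - (1/r²)φ₀ - φ₀' · r - φ₀ = k(r) for all r > 0. -/
open MeasureTheory Real Set

lemma aux_split (f : ℝ → ℝ) (hf : Integrable f) {a b : ℝ} (hab : a ≤ b) :
    ∫ x in Ioi a, f x = (∫ x in a..b, f x) + ∫ x in Ioi b, f x := by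
  rw [intervalIntegral.integral_of_le hab, ← setIntegral_union]
  · rw [Ioc_union_Ioi_eq_Ioi hab]
  · exact Ioc_disjoint_Ioi le_rfl
  · exact measurableSet_Ioi
  · exact hf.integrableOn
  · exact hf.integrableOn

theorem stmt1 (k : ℝ → ℝ) (hk : ContDiff ℝ (⊤ : ℕ∞) k)
    (hsupp : Function.support k ⊆ Set.Icc 0 1)
    (φ₀ : ℝ → ℝ)
    (hφ₀ : ∀ r > (0:ℝ), φ₀ r =
      -(1/r) * ∫ s in (0:ℝ)..r, s * Real.exp (s^2/2) *
        (∫ l in Set.Ioi s, Real.exp (-l^2/2) * k l)) :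
    ∃ φ' φ'' : ℝ → ℝ,
      ∀ r > (0:ℝ), HasDerivAt φ₀ (φ' r) r ∧ HasDerivAt φ' (φ'' r) r ∧
        φ'' r + (1/r) * φ' r - (1/r^2) * φ₀ r - φ' r * r - φ₀ r = k r := by
  have hkc : Continuous k := hk.continuous
  set f : ℝ → ℝ := fun l => Real.exp (-l^2/2) * k l with hfdef
  have hfc : Continuous f := by fun_prop
  have hfcs : HasCompactSupport f := by
    apply HasCompactSupport.intro (isCompact_Icc (a := (0:ℝ)) (b := 1))
    intro x hx
    have : k x = 0 := by
      by_contra h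
      exact hx (hsupp h)
    simp [hfdef, this]
  have hfint : Integrable f := hfc.integrable_of_hasCompactSupport hfcs
  set G : ℝ → ℝ := fun s => ∫ l in Ioi s, f l with hGdef
  have hG : ∀ s, G s = G 0 - ∫ l in (0:ℝ)..s, f l := by
    intro s
    rcases le_total 0 s with h | h
    · rw [hGdef]; simp only
      rw [aux_split f hfint h]; ring
    · rw [hGdef]; simp only
      rw [aux_split f hfint h, intervalIntegral.integral_symm]; ring
  have hGd : ∀ s, HasDerivAt G (-f s) s := by
    intro s
    have h1 : HasDerivAt (fun u => ∫ l in (0:ℝ)..u, f l) (f s) s :=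
      intervalIntegral.integral_hasDerivAt_right hfint.intervalIntegrable
        (hfc.stronglyMeasurableAtFilter _ _) hfc.continuousAt
    have h2 : HasDerivAt (fun u => G 0 - ∫ l in (0:ℝ)..u, f l) (-f s) s := by
      simpa using (h1.const_sub (G 0))
    exact h2.congr_of_eventuallyEq (Filter.Eventually.of_forall hG)
  have hGc : Continuous G := by
    have : Differentiable ℝ G := fun s => (hGd s).differentiableAt
    exact this.continuous
  set g : ℝ → ℝ := fun s => s * Real.exp (s^2/2) * G s with hgdef
  have hgc : Continuous g := by
    apply Continuous.mul _ hGc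
    fun_prop
  set F : ℝ → ℝ := fun r => ∫ s in (0:ℝ)..r, g s with hFdef
  have hFd : ∀ r, HasDerivAt F (g r) r := fun r =>
    intervalIntegral.integral_hasDerivAt_right (hgc.intervalIntegrable _ _)
      (hgc.stronglyMeasurableAtFilter _ _) hgc.continuousAt
  refine ⟨fun r => -(Real.exp (r^2/2) * G r) + F r / r^2,
    fun r => -(r * Real.exp (r^2/2) * G r) + k r + Real.exp (r^2/2) * G r / r
      - 2 * F r / r^3, ?_⟩
  intro r hr
  have hr0 : r ≠ 0 := ne_of_gt hr
  have hexp : ∀ s : ℝ, HasDerivAt (fun u : ℝ => Real.exp (u^2/2)) (s * Real.exp (s^2/2)) s := by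
    intro s
    have h1 : HasDerivAt (fun u : ℝ => u^2/2) s s := by
      simpa using (hasDerivAt_pow 2 s).div_const 2
    simpa [mul_comm] using h1.exp
  have hEG : HasDerivAt (fun u => Real.exp (u^2/2) * G u)
      (r * Real.exp (r^2/2) * G r + Real.exp (r^2/2) * (-f r)) r :=
    (hexp r).mul (hGd r)
  have hE1 : Real.exp (r^2/2) * Real.exp (-r^2/2) = 1 := by
    rw [← Real.exp_add, show r^2/2 + -r^2/2 = 0 by ring, Real.exp_zero]
  -- φ₀ equals -(1/r) * F r near r
  have hev : φ₀ =ᶠ[nhds r] fun u => -(1/u) * F u := by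
    filter_upwards [Ioi_mem_nhds hr] with u hu
    exact hφ₀ u hu
  have hd1 : HasDerivAt (fun u => -(1/u) * F u)
      (-(Real.exp (r^2/2) * G r) + F r / r^2) r := by
    have hinv : HasDerivAt (fun u : ℝ => -(1/u)) (1/r^2) r := by
      have := (hasDerivAt_inv hr0).neg
      simpa [one_div, pow_two, Pi.neg_def] using this
    have := hinv.mul (hFd r)
    refine this.congr_deriv ?_; symm
    rw [hgdef]; simp only [hFdef]
    field_simp
    ring
  have hd0 : HasDerivAt φ₀ (-(Real.exp (r^2/2) * G r) + F r / r^2) r :=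
    hd1.congr_of_eventuallyEq hev
  have hd2 : HasDerivAt (fun u => -(Real.exp (u^2/2) * G u) + F u / u^2)
      (-(r * Real.exp (r^2/2) * G r) + k r + Real.exp (r^2/2) * G r / r
        - 2 * F r / r^3) r := by
    have hpow : HasDerivAt (fun u : ℝ => u^2) (2 * r) r := by
      simpa using hasDerivAt_pow 2 r
    have hdiv : HasDerivAt (fun u => F u / u^2)
        ((g r * r^2 - F r * (2*r)) / (r^2)^2) r :=
      (hFd r).div hpow (pow_ne_zero 2 hr0)
    have := hEG.neg.add hdiv
    refine this.congr_deriv ?_; symm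
    rw [hgdef, hfdef]; simp only
    field_simp
    linear_combination (-(r^3 * k r)) * (by rw [← Real.exp_add, add_neg_cancel, Real.exp_zero] : Real.exp (r^2/2) * Real.exp (-(r^2/2)) = 1)
  refine ⟨hd0, hd2, ?_⟩
  rw [hφ₀ r hr]
  have hFr : (∫ s in (0:ℝ)..r, s * Real.exp (s^2/2) *
      (∫ l in Set.Ioi s, Real.exp (-l^2/2) * k l)) = F r := rfl
  rw [hFr]
  field_simp
  ring
end

section
/- Let k : ℝ → ℝ be continuous with support in [0,1], and define φ₀(r) = -(1/r)∫₀^r s·e^{s²/2}(∫_s^∞ e^{-l²/2} k(l) dl) ds. Then there exists a constant C > 0 (depending only on k) such that |φ₀(r)| ≤ C·r/(r² + 1) for all r > 0. -/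
/-!
Write `F s = ∫_s^∞ e^{-l²/2} k l dl`. Since `k` vanishes beyond `1`, so does `F`, and `|F|` is bounded
by `‖e^{-l²/2} k‖₁`. Hence the integrand `g s = s e^{s²/2} F s` of `φ₀` vanishes beyond `1` and is
`O(s)` on `[0, 1]`, so `|∫₀^r g| = O(min(r, 1)²)`; finally `min(r, 1)² / (2r) ≤ r / (r² + 1)`.
-/

open MeasureTheory Real Set

section

variable {X E : Type*} [MeasurableSpace X] [NormedAddCommGroup E] [NormedSpace ℝ E]

theorem norm_setIntegral_le_integral_norm {μ : Measure X} {f : X → E} (hf : Integrable f μ)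
    (s : Set X) : ‖∫ x in s, f x ∂μ‖ ≤ ∫ x, ‖f x‖ ∂μ :=
  (norm_integral_le_integral_norm f).trans <|
    setIntegral_le_integral hf.norm (Filter.Eventually.of_forall fun _ => norm_nonneg _)

theorem setIntegral_Ioi_eq_zero_of_support_subset_Iic {μ : Measure ℝ} {f : ℝ → E} {a s : ℝ}
    (hf : Function.support f ⊆ Iic a) (hs : a ≤ s) : ∫ x in Ioi s, f x ∂μ = 0 :=
  setIntegral_eq_zero_of_forall_eq_zero fun _ hx =>
    Function.notMem_support.mp fun hfx => (hf hfx).not_gt (hs.trans_lt hx)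

end

theorem abs_intervalIntegral_le_of_abs_le_mul_self {g : ℝ → ℝ} {B m : ℝ}
    (hbound : ∀ s ∈ Icc 0 m, |g s| ≤ B * s) (hm : 0 ≤ m) :
    |∫ s in (0:ℝ)..m, g s| ≤ B * m ^ 2 / 2 :=
  calc |∫ s in (0:ℝ)..m, g s| ≤ ∫ s in (0:ℝ)..m, B * s :=
        intervalIntegral.norm_integral_le_of_norm_le hm
          (Filter.Eventually.of_forall fun s hs =>
            (Real.norm_eq_abs _).trans_le (hbound s (Ioc_subset_Icc_self hs)))
          ((by fun_prop : Continuous fun s : ℝ => B * s).intervalIntegrable 0 m)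
    _ = B * m ^ 2 / 2 := by
        rw [intervalIntegral.integral_const_mul, integral_id]
        ring

theorem intervalIntegral_eq_intervalIntegral_min_one {g : ℝ → ℝ} {r : ℝ}
    (hg : ContinuousOn g (Ici 0)) (hvanish : ∀ s, 1 ≤ s → g s = 0) (hr : 0 ≤ r) :
    ∫ s in (0:ℝ)..r, g s = ∫ s in (0:ℝ)..min r 1, g s := by
  rcases le_total r 1 with hr1 | hr1
  · rw [min_eq_left hr1]
  have hint : ∀ a b : ℝ, 0 ≤ a → 0 ≤ b → IntervalIntegrable g volume a b := fun a b ha hb =>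
    (hg.mono fun x hx => le_inf ha hb |>.trans hx.1).intervalIntegrable
  have htail : ∫ s in (1:ℝ)..r, g s = 0 := by
    rw [intervalIntegral.integral_congr (g := fun _ => 0) fun s hs => hvanish s ?_,
      intervalIntegral.integral_zero]
    rw [uIcc_of_le hr1] at hs
    exact hs.1
  rw [min_eq_right hr1, ← intervalIntegral.integral_add_adjacent_intervals
    (hint 0 1 le_rfl zero_le_one) (hint 1 r zero_le_one hr), htail, add_zero]

theorem min_one_sq_div_le (r : ℝ) (hr : 0 < r) : min r 1 ^ 2 / (2 * r) ≤ r / (r ^ 2 + 1) := by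
  rw [div_le_div_iff₀ (by positivity) (by positivity)]
  rcases le_total r 1 with hr1 | hr1
  · rw [min_eq_left hr1]
    nlinarith [mul_nonneg (pow_nonneg hr.le 3) (sub_nonneg.mpr hr1)]
  · rw [min_eq_right hr1]
    nlinarith

theorem stmt2 (k : ℝ → ℝ) (hk : Continuous k)
    (hsupp : Function.support k ⊆ Set.Icc 0 1)
    (φ₀ : ℝ → ℝ)
    (hφ₀ : ∀ r > (0:ℝ), φ₀ r =
      -(1/r) * ∫ s in (0:ℝ)..r, s * Real.exp (s^2/2) *
        (∫ l in Set.Ioi s, Real.exp (-l^2/2) * k l)) :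
    ∃ C > (0:ℝ), ∀ r > (0:ℝ), |φ₀ r| ≤ C * r / (r^2 + 1) := by
  set f : ℝ → ℝ := fun l => exp (-l ^ 2 / 2) * k l
  have hf_supp : Function.support f ⊆ Icc 0 1 := (Function.support_mul_subset_right _ _).trans hsupp
  have hf_int : Integrable f :=
    (by fun_prop : Continuous f).integrable_of_hasCompactSupport
      (HasCompactSupport.of_support_subset_isCompact isCompact_Icc hf_supp)
  set M := ∫ l, ‖f l‖
  set B := exp (1 / 2) * M + 1
  set g : ℝ → ℝ := fun s => s * exp (s ^ 2 / 2) * ∫ l in Ioi s, f l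
  have hg_cont : ContinuousOn g (Ici 0) :=
    (by fun_prop : Continuous fun s : ℝ => s * exp (s ^ 2 / 2)).continuousOn.mul
      hf_int.integrableOn.continuousOn_Ici_primitive_Ioi
  have hg_vanish : ∀ s, 1 ≤ s → g s = 0 := fun s hs => by
    simp only [g, setIntegral_Ioi_eq_zero_of_support_subset_Iic
      (hf_supp.trans Icc_subset_Iic_self) hs, mul_zero]
  have hg_bound : ∀ s ∈ Icc 0 1, |g s| ≤ B * s := fun s ⟨hs0, hs1⟩ => by
    have hexp : exp (s ^ 2 / 2) ≤ exp (1 / 2) := exp_le_exp.mpr (by nlinarith)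
    calc |g s| = s * exp (s ^ 2 / 2) * ‖∫ l in Ioi s, f l‖ := by
          rw [abs_mul, abs_mul, abs_of_nonneg hs0, abs_of_pos (exp_pos _), Real.norm_eq_abs]
      _ ≤ s * exp (1 / 2) * M := by
          gcongr
          exact norm_setIntegral_le_integral_norm hf_int _
      _ ≤ B * s := by linarith
  refine ⟨B, by positivity, fun r hr => ?_⟩
  rw [hφ₀ r hr, abs_mul, abs_neg, abs_of_pos (one_div_pos.mpr hr),
    intervalIntegral_eq_intervalIntegral_min_one hg_cont hg_vanish hr.le]
  calc 1 / r * |∫ s in (0:ℝ)..min r 1, g s| ≤ 1 / r * (B * min r 1 ^ 2 / 2) := by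
        gcongr
        exact abs_intervalIntegral_le_of_abs_le_mul_self
          (fun s hs => hg_bound s ⟨hs.1, hs.2.trans (min_le_right r 1)⟩) (le_min hr.le zero_le_one)
    _ = B * (min r 1 ^ 2 / (2 * r)) := by field_simp
    _ ≤ B * r / (r ^ 2 + 1) := by
        rw [mul_div_assoc]
        exact mul_le_mul_of_nonneg_left (min_one_sq_div_le r hr) (by positivity)
end

section
/- Let k : ℝ → ℝ be continuous with support in [0,1], and define φ₀(r) = -(1/r)∫₀^r s·e^{s²/2}(∫_s^∞ e^{-l²/2} k(l) dl) ds. Then there exists C > 0 depending only on k such that |φ₀'(r)| ≤ C/(r² + 1) for all r > 0. -/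
/-!
Put `g l = exp (-l²/2) k l` and `f s = s exp (s²/2) ∫_s^∞ g`. Since `g` vanishes beyond `1`, the
tail integral is continuous and vanishes on `[1, ∞)`, so `f` is continuous, `f = O(s)` on `[0, 1]`
and `f = 0` on `[1, ∞)`. With `F = ∫₀^r f`, we have `φ₀ = -F(r)/r` and `φ₀' = F(r)/r² - f(r)/r`.
On `(0, 1]` both terms are bounded because `F(r) = O(r²)`; on `[1, ∞)` the second term vanishes
and `F(r) = F(1)`, so the derivative is `F(1)/r²`.
-/

open MeasureTheory Real Set

section TailIntegral

variable {g : ℝ → ℝ} {b : ℝ}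

theorem integral_Ioi_eq_intervalIntegral_of_support_subset_Iic (hg : g.support ⊆ Iic b)
    (s : ℝ) : ∫ l in Ioi s, g l = ∫ l in s..b, g l := by
  have hvanish : ∀ l, b < l → g l = 0 := fun l hl =>
    Function.notMem_support.mp fun h => (not_le.mpr hl) (hg h)
  rcases le_or_gt s b with hsb | hbs
  · rw [intervalIntegral.integral_of_le hsb]
    refine setIntegral_eq_of_subset_of_forall_sdiff_eq_zero measurableSet_Ioi
      Ioc_subset_Ioi_self fun l hl => hvanish l ?_
    simpa [hl.1.out] using hl.2
  · rw [setIntegral_eq_zero_of_forall_eq_zero (t := Ioi s) fun l hl => hvanish l (hbs.trans hl),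
      intervalIntegral.integral_zero_ae (Filter.Eventually.of_forall fun l hl => hvanish l ?_)]
    rw [uIoc_of_ge hbs.le] at hl
    exact hl.1

theorem integral_Ioi_eq_zero_of_support_subset_Iic (hg : g.support ⊆ Iic b) {s : ℝ}
    (hs : b ≤ s) : ∫ l in Ioi s, g l = 0 :=
  setIntegral_eq_zero_of_forall_eq_zero fun _ hl =>
    Function.notMem_support.mp fun h => (not_le.mpr (hs.trans_lt hl)) (hg h)

theorem continuous_integral_Ioi_of_support_subset_Iic (hgc : Continuous g)
    (hg : g.support ⊆ Iic b) : Continuous fun s => ∫ l in Ioi s, g l := by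
  have hprim : (fun s => ∫ l in Ioi s, g l) = fun s => -∫ l in b..s, g l := funext fun s => by
    rw [integral_Ioi_eq_intervalIntegral_of_support_subset_Iic hg, intervalIntegral.integral_symm]
  rw [hprim]
  exact (intervalIntegral.continuous_primitive (fun _ _ => hgc.intervalIntegrable _ _) b).neg

end TailIntegral

section AveragedPrimitive

variable {f : ℝ → ℝ} {B : ℝ}

theorem hasDerivAt_neg_inv_mul_primitive (hf : Continuous f) {r : ℝ} (hr : r ≠ 0) :
    HasDerivAt (fun x => -(1 / x) * ∫ s in (0:ℝ)..x, f s)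
      ((∫ s in (0:ℝ)..r, f s) / r ^ 2 - f r / r) r := by
  have hinv : HasDerivAt (fun x : ℝ => -(1 / x)) (1 / r ^ 2) r := by
    simpa [one_div] using (hasDerivAt_inv hr).fun_neg
  exact (hinv.mul (hf.integral_hasStrictDerivAt 0 r).hasDerivAt).congr_deriv (by field_simp; ring)

theorem abs_intervalIntegral_le_mul_sq {r : ℝ} (hr : 0 ≤ r)
    (hB : ∀ s ∈ Icc (0:ℝ) r, |f s| ≤ B * s) : |∫ s in (0:ℝ)..r, f s| ≤ B * r ^ 2 := by
  have hbound : ∀ s ∈ uIoc (0:ℝ) r, ‖f s‖ ≤ B * r := by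
    intro s hs
    rw [uIoc_of_le hr] at hs
    have hBr : 0 ≤ B * r := (abs_nonneg _).trans (hB r ⟨hr, le_rfl⟩)
    exact (hB s ⟨hs.1.le, hs.2⟩).trans
      (mul_le_mul_of_nonneg_left hs.2 (nonneg_of_mul_nonneg_left hBr (hs.1.trans_le hs.2)))
  calc |∫ s in (0:ℝ)..r, f s| ≤ B * r * |r - 0| :=
        intervalIntegral.norm_integral_le_of_norm_le_const hbound
    _ = B * r ^ 2 := by rw [sub_zero, abs_of_nonneg hr]; ring

theorem intervalIntegral_eq_of_forall_le_eq_zero (hf : Continuous f) {a c r : ℝ}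
    (hfa : ∀ s, a ≤ s → f s = 0) (hr : a ≤ r) : ∫ s in c..r, f s = ∫ s in c..a, f s := by
  have htail : ∫ s in a..r, f s = 0 :=
    intervalIntegral.integral_zero_ae (Filter.Eventually.of_forall fun s hs => by
      rw [uIoc_of_le hr] at hs
      exact hfa s hs.1.le)
  rw [← intervalIntegral.integral_add_adjacent_intervals (hf.intervalIntegrable c a)
    (hf.intervalIntegrable a r), htail, add_zero]

theorem abs_primitive_div_sq_sub_div_le (hf : Continuous f)
    (hB : ∀ s ∈ Icc (0:ℝ) 1, |f s| ≤ B * s) (hf1 : ∀ s, 1 ≤ s → f s = 0) {r : ℝ} (hr : 0 < r) :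
    |(∫ s in (0:ℝ)..r, f s) / r ^ 2 - f r / r| ≤ 4 * B / (r ^ 2 + 1) := by
  have hr2 : 0 < r ^ 2 := by positivity
  have hB0 : 0 ≤ B := (abs_nonneg _).trans (by simpa using hB 1 ⟨zero_le_one, le_rfl⟩)
  rcases le_total r 1 with h1 | h1
  · have hF : |∫ s in (0:ℝ)..r, f s| / r ^ 2 ≤ B := by
      rw [div_le_iff₀ hr2]
      exact abs_intervalIntegral_le_mul_sq hr.le fun s hs => hB s ⟨hs.1, hs.2.trans h1⟩
    have hfr : |f r| / r ≤ B := by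
      rw [div_le_iff₀ hr]; exact hB r ⟨hr.le, h1⟩
    have hsmall : 2 * B ≤ 4 * B / (r ^ 2 + 1) := by
      have : r ^ 2 ≤ 1 := by nlinarith
      rw [le_div_iff₀ (by positivity)]; nlinarith
    calc |(∫ s in (0:ℝ)..r, f s) / r ^ 2 - f r / r|
        ≤ |∫ s in (0:ℝ)..r, f s| / r ^ 2 + |f r| / r := by
          refine (abs_sub _ _).trans_eq ?_
          rw [abs_div, abs_div, abs_of_pos hr2, abs_of_pos hr]
      _ ≤ 4 * B / (r ^ 2 + 1) := by linarith
  · have hF1 : |∫ s in (0:ℝ)..1, f s| ≤ B := by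
      simpa using abs_intervalIntegral_le_mul_sq zero_le_one hB
    rw [intervalIntegral_eq_of_forall_le_eq_zero hf hf1 h1, hf1 r h1, zero_div, sub_zero, abs_div,
      abs_of_pos hr2, div_le_div_iff₀ hr2 (by positivity)]
    have : r ^ 2 + 1 ≤ 2 * r ^ 2 := by nlinarith
    nlinarith [mul_le_mul hF1 this (by positivity) hB0]

end AveragedPrimitive

theorem stmt3 (k : ℝ → ℝ) (hk : Continuous k)
    (hsupp : Function.support k ⊆ Set.Icc 0 1)
    (φ₀ : ℝ → ℝ)
    (hφ₀ : ∀ r > (0:ℝ), φ₀ r =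
      -(1/r) * ∫ s in (0:ℝ)..r, s * Real.exp (s^2/2) *
        (∫ l in Set.Ioi s, Real.exp (-l^2/2) * k l)) :
    (∀ r > (0:ℝ), DifferentiableAt ℝ φ₀ r) ∧
    ∃ C > (0:ℝ), ∀ r > (0:ℝ), |deriv φ₀ r| ≤ C / (r^2 + 1) := by
  set g : ℝ → ℝ := fun l => exp (-l ^ 2 / 2) * k l
  have hg : g.support ⊆ Iic 1 := fun l hl => (hsupp (Function.support_mul_subset_right _ _ hl)).2
  have hG := continuous_integral_Ioi_of_support_subset_Iic (by fun_prop) hg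
  set f : ℝ → ℝ := fun s => s * exp (s ^ 2 / 2) * ∫ l in Ioi s, g l
  have hf : Continuous f := by fun_prop
  have hf1 : ∀ s, 1 ≤ s → f s = 0 := fun s hs => by
    simp [f, integral_Ioi_eq_zero_of_support_subset_Iic hg hs]
  obtain ⟨M, hM⟩ := isCompact_Icc.exists_bound_of_continuousOn
    (f := fun s => exp (s ^ 2 / 2) * ∫ l in Ioi s, g l) (s := Icc (0:ℝ) 1) (by fun_prop)
  have hB : ∀ s ∈ Icc (0:ℝ) 1, |f s| ≤ M * s := fun s hs => by
    simpa [f, mul_assoc, abs_mul, abs_of_nonneg hs.1, mul_comm M] using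
      mul_le_mul_of_nonneg_left (hM s hs) hs.1
  have hderiv : ∀ r > (0:ℝ), HasDerivAt φ₀ ((∫ s in (0:ℝ)..r, f s) / r ^ 2 - f r / r) r :=
    fun r hr => (hasDerivAt_neg_inv_mul_primitive hf hr.ne').congr_of_eventuallyEq <|
      Filter.eventually_of_mem (Ioi_mem_nhds hr) fun x hx => hφ₀ x hx
  have hM0 : 0 ≤ M := (norm_nonneg _).trans (hM 0 ⟨le_rfl, zero_le_one⟩)
  refine ⟨fun r hr => (hderiv r hr).differentiableAt, 4 * M + 1, by positivity, fun r hr => ?_⟩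
  rw [(hderiv r hr).deriv]
  exact (abs_primitive_div_sq_sub_div_le hf hB hf1 hr).trans (by gcongr; linarith)
end

section
/- Let k : ℝ → ℝ be continuous with support in [0,1], k ≤ 0 and k not identically zero. Then φ₀(r) = -(1/r)∫₀^r s·e^{s²/2}(∫_s^∞ e^{-l²/2} k(l) dl) ds satisfies φ₀(r) > 0 for all r > 0, and moreover there exists c > 0 such that φ₀(r) ≥ c·r/(r²+1) for all r ∈ (0,1]. -/
/-!
With `g s = ∫_s^∞ e^{-l²/2} k l dl` we have `g ≤ 0`, and `g` is monotone since the integrand is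
nonpositive. As `k` is continuous with support in `[0, 1]`, its support is an open subset of
`(0, 1)`; at a point `x₀` of it, `g (x₀ / 2) < 0`. Bounding `s e^{s²/2} g s ≤ g a · s` on
`[0, a]` with `a = x₀ / 2` gives `φ₀ r ≥ -g a · (min r a)² / (2 r)`, which is positive for all
`r > 0` and at least `-g a · a² r / 2 ≥ c r / (r² + 1)` for `r ≤ 1`.
-/

open MeasureTheory Real Set

lemma monotone_setIntegral_Ioi_of_nonpos {h : ℝ → ℝ} (hint : Integrable h) (hh : ∀ l, h l ≤ 0) :
    Monotone fun s => ∫ l in Ioi s, h l := by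
  intro s t hst
  have hneg : ∫ l in Ioi t, -h l ≤ ∫ l in Ioi s, -h l :=
    setIntegral_mono_set hint.neg.integrableOn (ae_of_all _ fun l => neg_nonneg.2 (hh l))
      (Ioi_subset_Ioi hst).eventuallyLE
  rw [integral_neg, integral_neg] at hneg
  linarith

lemma setIntegral_Ioi_neg_of_nonpos {h : ℝ → ℝ} (hc : Continuous h) (hint : Integrable h)
    (hh : ∀ l, h l ≤ 0) {a x : ℝ} (hax : a < x) (hx : h x ≠ 0) :
    ∫ l in Ioi a, h l < 0 := by
  have hpos : 0 < ∫ l in Ioi a, -h l := by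
    rw [setIntegral_pos_iff_support_of_nonneg_ae
      (ae_of_all _ fun l => neg_nonneg.2 (hh l)) hint.neg.integrableOn]
    exact (hc.neg.isOpen_support.inter isOpen_Ioi).measure_pos volume
      ⟨x, by simpa using hx, hax⟩
  rw [integral_neg] at hpos
  linarith

lemma intervalIntegral_mul_exp_mul_le {g : ℝ → ℝ} (hg : Monotone g) (hg0 : ∀ s, g s ≤ 0)
    {a r : ℝ} (ha : 0 < a) (hr : 0 < r) :
    ∫ s in (0:ℝ)..r, s * exp (s ^ 2 / 2) * g s ≤ g a * (min r a) ^ 2 / 2 := by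
  set t := min r a
  have ht : 0 < t := lt_min hr ha
  have hint : ∀ u v, IntervalIntegrable (fun s => s * exp (s ^ 2 / 2) * g s) volume u v :=
    fun u v => hg.intervalIntegrable.continuousOn_mul (by fun_prop)
  have htail : ∫ s in t..r, s * exp (s ^ 2 / 2) * g s ≤ 0 := by
    simpa using intervalIntegral.integral_mono_on (min_le_left r a) (hint t r)
      intervalIntegrable_const fun s hs =>
        mul_nonpos_of_nonneg_of_nonpos (by have := ht.trans_le hs.1; positivity) (hg0 s)
  have hhead : ∫ s in (0:ℝ)..t, s * exp (s ^ 2 / 2) * g s ≤ g a * t ^ 2 / 2 := by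
    have hle : ∀ s ∈ Icc 0 t, s * exp (s ^ 2 / 2) * g s ≤ g a * s := by
      intro s ⟨hs0, hst⟩
      have hgs : g s ≤ g a := hg (hst.trans (min_le_right r a))
      have hexp : 1 ≤ exp (s ^ 2 / 2) := one_le_exp (by positivity)
      nlinarith [mul_le_mul_of_nonneg_left hgs (mul_nonneg hs0 (exp_pos (s ^ 2 / 2)).le),
        mul_nonneg hs0 (sub_nonneg.2 hexp), hg0 a]
    calc ∫ s in (0:ℝ)..t, s * exp (s ^ 2 / 2) * g s
        ≤ ∫ s in (0:ℝ)..t, g a * s :=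
          intervalIntegral.integral_mono_on ht.le (hint 0 t)
            ((continuous_const.mul continuous_id).intervalIntegrable 0 t) hle
      _ = g a * t ^ 2 / 2 := by
          rw [intervalIntegral.integral_const_mul, integral_id]
          ring
  rw [← intervalIntegral.integral_add_adjacent_intervals (hint 0 t) (hint t r)]
  linarith

lemma mul_div_sq_add_one_le_min_sq_div {M a r : ℝ} (hM : 0 < M) (ha : 0 < a) (ha1 : a ≤ 1)
    (hr : 0 < r) (hr1 : r ≤ 1) :
    M * a ^ 2 / 2 * r / (r ^ 2 + 1) ≤ M * (min r a) ^ 2 / 2 / r := by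
  have hmin : a * r ≤ min r a :=
    le_min (mul_le_of_le_one_left hr.le ha1) (mul_le_of_le_one_right ha.le hr1)
  calc M * a ^ 2 / 2 * r / (r ^ 2 + 1) ≤ M * (a * r) ^ 2 / 2 / r := by
        rw [div_le_div_iff₀ (by positivity) hr]
        nlinarith [mul_pos (mul_pos hM (pow_pos ha 2)) (pow_pos hr 4)]
    _ ≤ M * (min r a) ^ 2 / 2 / r := by gcongr

theorem stmt4 (k : ℝ → ℝ) (hk : Continuous k)
    (hsupp : Function.support k ⊆ Set.Icc 0 1)
    (hneg : ∀ x, k x ≤ 0) (hne : k ≠ 0)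
    (φ₀ : ℝ → ℝ)
    (hφ₀ : ∀ r > (0:ℝ), φ₀ r =
      -(1/r) * ∫ s in (0:ℝ)..r, s * Real.exp (s^2/2) *
        (∫ l in Set.Ioi s, Real.exp (-l^2/2) * k l)) :
    (∀ r > (0:ℝ), φ₀ r > 0) ∧
    ∃ c > (0:ℝ), ∀ r ∈ Set.Ioc (0:ℝ) 1, φ₀ r ≥ c * r / (r^2 + 1) := by
  set h : ℝ → ℝ := fun l => exp (-l ^ 2 / 2) * k l
  set g : ℝ → ℝ := fun s => ∫ l in Ioi s, h l
  have hh_cont : Continuous h := by fun_prop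
  have hh_nonpos : ∀ l, h l ≤ 0 := fun l => mul_nonpos_of_nonneg_of_nonpos (exp_pos _).le (hneg l)
  have hh_int : Integrable h := hh_cont.integrable_of_hasCompactSupport <|
    .of_support_subset_isCompact isCompact_Icc fun l hl => hsupp (right_ne_zero_of_mul hl)
  have hg_mono : Monotone g := monotone_setIntegral_Ioi_of_nonpos hh_int hh_nonpos
  have hg_nonpos : ∀ s, g s ≤ 0 := fun s =>
    setIntegral_nonpos measurableSet_Ioi fun l _ => hh_nonpos l
  obtain ⟨x₀, hx₀⟩ : ∃ x, k x ≠ 0 := Function.ne_iff.1 hne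
  have hx₀_mem : x₀ ∈ Ioo (0:ℝ) 1 := by
    rw [← interior_Icc]
    exact (hk.isOpen_support.subset_interior_iff.2 hsupp) hx₀
  set a := x₀ / 2
  have ha : 0 < a := half_pos hx₀_mem.1
  have ha1 : a ≤ 1 := (half_lt_self hx₀_mem.1).le.trans hx₀_mem.2.le
  have hga : g a < 0 := setIntegral_Ioi_neg_of_nonpos hh_cont hh_int hh_nonpos
    (half_lt_self hx₀_mem.1) (mul_ne_zero (exp_pos _).ne' hx₀)
  have hkey : ∀ r > 0, -g a * (min r a) ^ 2 / 2 / r ≤ φ₀ r := fun r hr => by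
    have := intervalIntegral_mul_exp_mul_le hg_mono hg_nonpos ha hr
    rw [hφ₀ r hr, div_le_iff₀ hr]
    field_simp
    linarith
  have hM : 0 < -g a := neg_pos.2 hga
  refine ⟨fun r hr => lt_of_lt_of_le ?_ (hkey r hr), -g a * a ^ 2 / 2, by positivity,
    fun r ⟨hr, hr1⟩ => ?_⟩
  · have := lt_min hr ha
    positivity
  exact (mul_div_sq_add_one_le_min_sq_div hM ha ha1 hr hr1).trans (hkey r hr)
end
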